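/- arXiv:2504.09505 — 6 statements merged into one kernel-verified Lean document; each statement's English description precedes it below -/
import Mathlib

section
/- Let R be a commutative noetherian local ring with residue field k, and let M be a finitely generated R-module with decomposition M ≅ X ⊕ R^a where X is stable. Then the dimension over k of the space of R-linear maps M → k that factor through a finitely generated free module equals a. -/
/-! A map `M → k` that factors through a free module `F` vanishes on the stable summand `X`:
every linear form on `X` is non-surjective, hence lands in `𝔪`, so `X → F` lands in `𝔪 F`,
which every map `F → k` kills. Hence the maps factoring through a free module are exactly the
`g ∘ π` with `π : M → R^a` the projection, a `k`-space isomorphic to `Hom_R(R^a, k) ≅ k^a`. -/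

noncomputable section

/-- A linear map factors through a finitely generated free module
(equivalently, through a projective module, for maps between finitely
generated modules). -/
def FactorsThruFree (R : Type) [Ring R] {M N : Type} [AddCommGroup M] [Module R M]
    [AddCommGroup N] [Module R N] (f : M →ₗ[R] N) : Prop :=
  ∃ (b : ℕ) (g : (Fin b → R) →ₗ[R] N) (h : M →ₗ[R] (Fin b → R)), f = g ∘ₗ h

/-- `M` is stable: it has no nonzero free direct summand.  (Over any ring, a f.g. module
has a nonzero free direct summand iff it admits a surjective linear map onto `R`.) -/
def IsStable (R : Type) [Ring R] (M : Type) [AddCommGroup M] [Module R M] : Prop :=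
  ∀ p : M →ₗ[R] R, ¬ Function.Surjective p

open IsLocalRing

theorem FactorsThruFree.comp {R : Type} [Ring R] {L M N : Type} [AddCommGroup L] [Module R L]
    [AddCommGroup M] [Module R M] [AddCommGroup N] [Module R N] {f : M →ₗ[R] N}
    (hf : FactorsThruFree R f) (φ : L →ₗ[R] M) : FactorsThruFree R (f ∘ₗ φ) := by
  obtain ⟨b, g, h, rfl⟩ := hf
  exact ⟨b, g, h ∘ₗ φ, rfl⟩

theorem IsStable.range_le_maximalIdeal {R : Type} [CommRing R] [IsLocalRing R]
    {X : Type} [AddCommGroup X] [Module R X] (hX : IsStable R X) (p : X →ₗ[R] R) :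
    LinearMap.range p ≤ maximalIdeal R :=
  le_maximalIdeal fun h ↦ hX p (LinearMap.range_eq_top.mp h)

theorem Module.IsTorsionBySet.apply_eq_zero_of_forall_mem {R N ι : Type*} [CommRing R]
    [AddCommGroup N] [Module R N] [Fintype ι] {I : Ideal R} (hN : Module.IsTorsionBySet R N I)
    (g : (ι → R) →ₗ[R] N) {v : ι → R} (hv : ∀ j, v j ∈ I) : g v = 0 := by
  classical
  rw [pi_eq_sum_univ v, map_sum]
  exact Finset.sum_eq_zero fun j _ ↦ by rw [map_smul]; exact hN (a := ⟨v j, hv j⟩)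

theorem IsStable.eq_zero_of_factorsThruFree {R : Type} [CommRing R] [IsLocalRing R]
    {X N : Type} [AddCommGroup X] [Module R X] [AddCommGroup N] [Module R N]
    (hN : Module.IsTorsionBySet R N (maximalIdeal R)) (hX : IsStable R X) {f : X →ₗ[R] N}
    (hf : FactorsThruFree R f) : f = 0 := by
  obtain ⟨b, g, h, rfl⟩ := hf
  ext x
  exact hN.apply_eq_zero_of_forall_mem g fun j ↦
    hX.range_le_maximalIdeal (LinearMap.proj j ∘ₗ h) ⟨x, rfl⟩

theorem isTorsionBySet_residueField (R : Type) [CommRing R] [IsLocalRing R] :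
    Module.IsTorsionBySet R (ResidueField R) (maximalIdeal R) := by
  intro x r
  rw [Algebra.smul_def, ResidueField.algebraMap_eq, (residue_eq_zero_iff _).mpr r.2, zero_mul]

theorem finrank_linearMap_pi_residueField (R ι : Type*) [CommRing R] [IsLocalRing R] [Fintype ι] :
    Module.finrank (ResidueField R) ((ι → R) →ₗ[R] ResidueField R) = Fintype.card ι := by
  rw [← ((Pi.basisFun R ι).constr (ResidueField R)).finrank_eq, Module.finrank_fintype_fun_eq_card]

theorem setOf_factorsThruFree_eq_range_lcomp {R : Type} [CommRing R] [IsLocalRing R]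
    {M X N : Type} [AddCommGroup M] [Module R M] [AddCommGroup X] [Module R X]
    [AddCommGroup N] [Module R N] (S : Type) [Semiring S] [Module S N] [SMulCommClass R S N]
    (hN : Module.IsTorsionBySet R N (maximalIdeal R)) (hX : IsStable R X) {a : ℕ}
    (e : M ≃ₗ[R] X × (Fin a → R)) :
    {f : M →ₗ[R] N | FactorsThruFree R f} =
      LinearMap.range (LinearMap.lcomp S N (LinearMap.snd R X (Fin a → R) ∘ₗ e.toLinearMap)) := by
  ext f
  constructor
  · intro hf
    let f' := f ∘ₗ e.symm.toLinearMap
    have hf'X : f' ∘ₗ LinearMap.inl R X (Fin a → R) = 0 :=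
      hX.eq_zero_of_factorsThruFree hN (hf.comp (e.symm.toLinearMap ∘ₗ LinearMap.inl R X _))
    refine ⟨f' ∘ₗ LinearMap.inr R X (Fin a → R), LinearMap.ext fun x ↦ ?_⟩
    have hf' : f x = f' (e x) := by simp [f']
    rw [hf', ← f'.coprod_comp_inl_inr, hf'X]
    simp
  · rintro ⟨g, rfl⟩
    exact ⟨a, g, _, rfl⟩

theorem stmt_1_general (R : Type) [CommRing R] [IsLocalRing R]
    (M X : Type) [AddCommGroup M] [Module R M]
    [AddCommGroup X] [Module R X]
    (a : ℕ) (hX : IsStable R X) (e : Nonempty (M ≃ₗ[R] X × (Fin a → R))) :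
    Module.finrank (IsLocalRing.ResidueField R)
      (Submodule.span (IsLocalRing.ResidueField R)
        {f : M →ₗ[R] IsLocalRing.ResidueField R | FactorsThruFree R f}) = a := by
  obtain ⟨e⟩ := e
  have hsurj : Function.Surjective (LinearMap.snd R X (Fin a → R) ∘ₗ e.toLinearMap) :=
    (LinearMap.snd_surjective (R := R) (M := X)).comp e.surjective
  rw [setOf_factorsThruFree_eq_range_lcomp (ResidueField R) (isTorsionBySet_residueField R) hX e,
    Submodule.span_eq,
    LinearMap.finrank_range_of_inj (LinearMap.lcomp_injective_of_surjective _ hsurj),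
    finrank_linearMap_pi_residueField, Fintype.card_fin]

/-- If `M ≅ X ⊕ R^a` with `X` stable, then the dimension over the residue field `k` of the
space of linear maps `M → k` factoring through a finitely generated free module equals `a`. -/
theorem stmt_1 (R : Type) [CommRing R] [IsNoetherianRing R] [IsLocalRing R]
    (M X : Type) [AddCommGroup M] [Module R M] [Module.Finite R M]
    [AddCommGroup X] [Module R X] [Module.Finite R X]
    (a : ℕ) (hX : IsStable R X) (e : Nonempty (M ≃ₗ[R] X × (Fin a → R))) :
    Module.finrank (IsLocalRing.ResidueField R)
      (Submodule.span (IsLocalRing.ResidueField R)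
        {f : M →ₗ[R] IsLocalRing.ResidueField R | FactorsThruFree R f}) = a :=
  stmt_1_general R M X a hX e
end
end

section
/- Let Λ be a noetherian ring, n ≥ 1 an integer, Y a finitely generated Λ-module of projective dimension at most n−1, and X' a finitely generated Λ-module with Ext^i_Λ(X', Λ) = 0 for all 1 ≤ i ≤ n. Then Ext^1_Λ(X', Y) = 0. -/
noncomputable section

/-- Projective dimension at most `n`. -/
def projDimLE (R : Type) [Ring R] :
    ℕ → (M : Type) → [AddCommGroup M] → [Module R M] → Prop
  | 0, M, _, _ => Module.Projective R M
  | n + 1, M, _, _ => ∃ (b : ℕ) (p : (Fin b → R) →ₗ[R] M),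
      Function.Surjective p ∧ projDimLE R n (LinearMap.ker p)

open CategoryTheory in
/-- The Ext group `Ext^i_Λ(X, Y)` (as a `ℤ`-module). -/
def extGrp (Λ : Type) [Ring Λ] (i : ℕ) (X Y : Type) [AddCommGroup X] [Module Λ X]
    [AddCommGroup Y] [Module Λ Y] : ModuleCat ℤ :=
  ((Ext ℤ (ModuleCat.{0} Λ) i).obj (Opposite.op (ModuleCat.of Λ X))).obj (ModuleCat.of Λ Y)

/-!
Fix a projective resolution `P` of `X'`. Since every `P_i` is projective, `Hom(P, -)` sends
short exact sequences of modules to short exact sequences of complexes, so `Ext^•(X', -)` has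
long exact sequences in the second variable. The vanishing of `Ext^j(X', Λ)` for `1 ≤ j ≤ n`
passes to finite free modules (biproducts) and to finitely generated projectives (retracts of
these). Dimension shifting along `0 → ker p → Λ^b → Y → 0`, whose kernel is finitely generated
because `Λ` is noetherian, then gives `Ext^j(X', Y) = 0` whenever `pd Y + j ≤ n`.
-/

open CategoryTheory Limits

universe v u

namespace ChainComplex

variable {C : Type u} [Category.{v} C] [Abelian C]
  {α : Type*} [AddRightCancelSemigroup α] [One α]

def linearYonedaFunctor (K : ChainComplex C α) : C ⥤ CochainComplex (ModuleCat.{v} ℤ) α where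
  obj Y := K.linearYonedaObj ℤ Y
  map f :=
    { f := fun i => ModuleCat.ofHom (Linear.rightComp ℤ (K.X i) f)
      comm' := fun _ _ _ => by ext; exact (Category.assoc _ _ _).symm }
  map_id _ := by ext; exact Category.comp_id _
  map_comp _ _ := by ext; exact (Category.assoc _ _ _).symm

instance (K : ChainComplex C α) : K.linearYonedaFunctor.Additive where
  map_add := by intros; ext; exact Preadditive.comp_add _ _ _ _ _ _

lemma linearYonedaFunctor_map_shortExact (K : ChainComplex C α) [∀ i, Projective (K.X i)]
    {S : ShortComplex C} (hS : S.ShortExact) : (S.map K.linearYonedaFunctor).ShortExact := by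
  have := hS.mono_f
  have := hS.epi_g
  refine HomologicalComplex.shortExact_of_degreewise_shortExact _ fun i ↦ .mk' ?_ ?_ ?_
  · rw [ShortComplex.moduleCat_exact_iff]
    intro (x : K.X i ⟶ S.X₂) hx
    exact ⟨hS.exact.lift x hx, hS.exact.lift_f x hx⟩
  · rw [ModuleCat.mono_iff_injective]
    intro (a : K.X i ⟶ S.X₁) b hab
    exact (cancel_mono S.f).mp hab
  · rw [ModuleCat.epi_iff_surjective]
    intro (y : K.X i ⟶ S.X₃)
    exact ⟨Projective.factorThru y S.g, Projective.factorThru_comp y S.g⟩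

end ChainComplex

namespace CategoryTheory.Functor

variable {Λ : Type u} [Ring Λ] {D : Type*} [Category D] [Abelian D]
  (G : ModuleCat.{u} Λ ⥤ D) [G.Additive]

lemma isZero_obj_pi_of_isZero_obj_self (h : IsZero (G.obj (.of Λ Λ))) (b : ℕ) :
    IsZero (G.obj (.of Λ (Fin b → Λ))) := by
  refine IsZero.of_iso ?_ (G.mapIso (ModuleCat.biproductIsoPi fun _ : Fin b ↦ .of Λ Λ).symm)
  refine IsZero.of_iso ?_ (G.mapBiproduct _)
  rw [IsZero.iff_id_eq_zero]
  ext j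
  exact h.eq_of_tgt _ _

lemma isZero_obj_of_projective (h : IsZero (G.obj (.of Λ Λ))) (Y : Type u)
    [AddCommGroup Y] [Module Λ Y] [Module.Finite Λ Y] [Module.Projective Λ Y] :
    IsZero (G.obj (.of Λ Y)) := by
  obtain ⟨b, q, hq⟩ := Module.Finite.exists_fin' Λ Y
  obtain ⟨s, hs⟩ := Module.projective_lifting_property q LinearMap.id hq
  let retract : Retract (ModuleCat.of Λ Y) (.of Λ (Fin b → Λ)) :=
    ⟨ModuleCat.ofHom s, ModuleCat.ofHom q, by ext x; exact LinearMap.congr_fun hs x⟩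
  exact IsZero.of_mono (retract.map G).i (G.isZero_obj_pi_of_isZero_obj_self h b)

end CategoryTheory.Functor

lemma isZero_homology_linearYonedaFunctor_of_projDimLE
    {Λ : Type} [Ring Λ] [IsNoetherianRing Λ]
    (K : ChainComplex (ModuleCat.{0} Λ) ℕ) [∀ i, Projective (K.X i)] {n : ℕ}
    (hΛ : ∀ i, 1 ≤ i → i ≤ n → IsZero ((K.linearYonedaFunctor.obj (.of Λ Λ)).homology i))
    (m : ℕ) {j : ℕ} (hj : 1 ≤ j) (hmj : m + j ≤ n) (Y : Type) [AddCommGroup Y] [Module Λ Y]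
    [Module.Finite Λ Y] (hY : projDimLE Λ m Y) :
    IsZero ((K.linearYonedaFunctor.obj (.of Λ Y)).homology j) := by
  induction m generalizing j Y with
  | zero =>
    have : Module.Projective Λ Y := hY
    exact Functor.isZero_obj_of_projective
      (K.linearYonedaFunctor ⋙ HomologicalComplex.homologyFunctor _ _ j) (hΛ j hj (by omega)) Y
  | succ m ih =>
    obtain ⟨b, p, hp, hker⟩ := hY
    have hses := K.linearYonedaFunctor_map_shortExact (LinearMap.shortExact_shortComplexKer hp)
    refine (hses.homology_exact₃ j (j + 1) rfl).isZero_of_both_isZero ?_ ?_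
    · exact Functor.isZero_obj_pi_of_isZero_obj_self
        (K.linearYonedaFunctor ⋙ HomologicalComplex.homologyFunctor _ _ j) (hΛ j hj (by omega)) b
    · exact ih (by omega) (by omega) _ hker

theorem stmt_2_general (Λ : Type) [Ring Λ] [IsNoetherianRing Λ] (n : ℕ) (hn : 1 ≤ n)
    (Y X' : Type) [AddCommGroup Y] [Module Λ Y] [Module.Finite Λ Y]
    [AddCommGroup X'] [Module Λ X']
    (hY : projDimLE Λ (n - 1) Y)
    (hX' : ∀ i, 1 ≤ i → i ≤ n → Subsingleton (extGrp Λ i X' Λ)) :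
    Subsingleton (extGrp Λ 1 X' Y) := by
  let P := projectiveResolution (ModuleCat.of Λ X')
  have hΛ : ∀ i, 1 ≤ i → i ≤ n →
      IsZero ((P.complex.linearYonedaFunctor.obj (.of Λ Λ)).homology i) := fun i hi hin ↦
    (ModuleCat.isZero_iff_subsingleton.mpr (hX' i hi hin)).of_iso (P.isoExt i _).symm
  have hExt : IsZero (extGrp Λ 1 X' Y) :=
    (isZero_homology_linearYonedaFunctor_of_projDimLE P.complex hΛ (n - 1) le_rfl (by omega) Y
      hY).of_iso (P.isoExt 1 _)
  exact ModuleCat.subsingleton_of_isZero hExt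

/-- If `pd_Λ Y ≤ n - 1` and `Ext^i_Λ(X', Λ) = 0` for `1 ≤ i ≤ n`, then `Ext^1_Λ(X', Y) = 0`. -/
theorem stmt_2 (Λ : Type) [Ring Λ] [IsNoetherianRing Λ] (n : ℕ) (hn : 1 ≤ n)
    (Y X' : Type) [AddCommGroup Y] [Module Λ Y] [Module.Finite Λ Y]
    [AddCommGroup X'] [Module Λ X'] [Module.Finite Λ X']
    (hY : projDimLE Λ (n - 1) Y)
    (hX' : ∀ i, 1 ≤ i → i ≤ n → Subsingleton (extGrp Λ i X' Λ)) :
    Subsingleton (extGrp Λ 1 X' Y) :=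
  stmt_2_general Λ n hn Y X' hY hX'
end
end

section
/- Let Λ be a noetherian ring and let 0 → Y → X → M → 0 be a short exact sequence of finitely generated Λ-modules with pd_Λ Y ≤ n−1 and Ext^i_Λ(X,Λ) = 0 for 1 ≤ i ≤ n. Then for every finitely generated Λ-module X' with Ext^i_Λ(X',Λ) = 0 for 1 ≤ i ≤ n, every homomorphism X' → M lifts through X → M. -/
/-!
Fix a projective resolution `P → X'`. Lifting `f : X' → M` through `p` amounts to lifting the
0-cocycle `f ∘ π` to a 0-cocycle with values in `X`; the obstruction is a 1-cocycle with values in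
`Y`, so it suffices that `Ext¹(X', Y) = 0`. That vanishing follows from `Ext^{≤ n}(X', Λ) = 0` and
`pd Y ≤ n - 1` by dimension shifting along a finite free resolution of `Y`, the noetherian
hypothesis keeping every syzygy finitely generated.
-/

noncomputable section

section Factorization

variable {R : Type*} [Ring R] {M N P A : Type*} [AddCommGroup M] [AddCommGroup N]
  [AddCommGroup P] [AddCommGroup A] [Module R M] [Module R N] [Module R P] [Module R A]
  {f : M →ₗ[R] N} {g : N →ₗ[R] P}

theorem Function.Exact.exists_comp_eq_of_injective (hfg : Function.Exact f g)
    (hf : Function.Injective f) (h : A →ₗ[R] N) (hh : g ∘ₗ h = 0) :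
    ∃ k : A →ₗ[R] M, f ∘ₗ k = h := by
  have hrange (a : A) : h a ∈ LinearMap.range f := (hfg _).1 (LinearMap.congr_fun hh a)
  refine ⟨(LinearEquiv.ofInjective f hf).symm ∘ₗ LinearMap.codRestrict _ h hrange, ?_⟩
  ext a
  simp

theorem Function.Exact.exists_comp_eq_of_surjective (hfg : Function.Exact f g)
    (hg : Function.Surjective g) (h : N →ₗ[R] A) (hh : h ∘ₗ f = 0) :
    ∃ k : P →ₗ[R] A, k ∘ₗ g = h :=
  ⟨(LinearMap.range f).liftQ h (LinearMap.range_le_ker_iff.mpr hh) ∘ₗ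
    (hfg.linearEquivOfSurjective hg).symm.toLinearMap, by ext; simp⟩

end Factorization

theorem HomologicalComplex.hom_d_comp_hom_d {R : Type*} [Ring R] {ι : Type*} {c : ComplexShape ι}
    (K : HomologicalComplex (ModuleCat R) c) (i j k : ι) :
    (K.d j k).hom ∘ₗ (K.d i j).hom = 0 := by
  rw [← ModuleCat.hom_comp, K.d_comp_d, ModuleCat.hom_zero]

namespace CategoryTheory.ProjectiveResolution

variable {Λ : Type} [Ring Λ] {X' : Type} [AddCommGroup X'] [Module Λ X']
  (P : ProjectiveResolution (ModuleCat.of Λ X'))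

/-- `Ext^{j+1}(X', Y) = 0`, computed as `H^{j+1} Hom_Λ(P, Y)`. -/
def ExtSuccVanishes (j : ℕ) (Y : Type*) [AddCommGroup Y] [Module Λ Y] : Prop :=
  ∀ φ : P.complex.X (j + 1) →ₗ[Λ] Y, φ ∘ₗ (P.complex.d (j + 2) (j + 1)).hom = 0 →
    ∃ μ : P.complex.X j →ₗ[Λ] Y, μ ∘ₗ (P.complex.d (j + 1) j).hom = φ

namespace ExtSuccVanishes

variable {P}

theorem of_subsingleton_extGrp {j : ℕ} {Y : Type} [AddCommGroup Y] [Module Λ Y]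
    (h : Subsingleton (extGrp Λ (j + 1) X' Y)) : P.ExtSuccVanishes j Y := by
  set K := P.complex.linearYonedaObj ℤ (ModuleCat.of Λ Y)
  have hK : K.ExactAt (j + 1) := by
    rw [K.exactAt_iff_isZero_homology]
    exact (@ModuleCat.isZero_of_subsingleton _ _ (extGrp Λ (j + 1) X' Y) h).of_iso
      (P.isoExt (j + 1) _).symm
  rw [K.exactAt_iff' j (j + 1) (j + 2) (by simp) (by simp), ShortComplex.moduleCat_exact_iff] at hK
  intro φ hφ
  obtain ⟨μ, hμ⟩ := hK (ModuleCat.ofHom φ) (by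
    change P.complex.d (j + 2) (j + 1) ≫ ModuleCat.ofHom φ = 0
    ext1
    exact hφ)
  exact ⟨μ.hom, congrArg ModuleCat.Hom.hom hμ⟩

theorem pi {j : ℕ} {ι : Type*} {Y : ι → Type*} [∀ k, AddCommGroup (Y k)] [∀ k, Module Λ (Y k)]
    (h : ∀ k, P.ExtSuccVanishes j (Y k)) : P.ExtSuccVanishes j (∀ k, Y k) := by
  intro φ hφ
  choose μ hμ using fun k ↦
    h k (LinearMap.proj k ∘ₗ φ) (by rw [LinearMap.comp_assoc, hφ, LinearMap.comp_zero])
  exact ⟨LinearMap.pi μ, by ext x k; exact LinearMap.congr_fun (hμ k) x⟩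

theorem of_retract {j : ℕ} {Y Z : Type*} [AddCommGroup Y] [Module Λ Y] [AddCommGroup Z]
    [Module Λ Z] (s : Y →ₗ[Λ] Z) (r : Z →ₗ[Λ] Y) (hrs : r ∘ₗ s = LinearMap.id)
    (h : P.ExtSuccVanishes j Z) : P.ExtSuccVanishes j Y := by
  intro φ hφ
  obtain ⟨μ, hμ⟩ := h (s ∘ₗ φ) (by rw [LinearMap.comp_assoc, hφ, LinearMap.comp_zero])
  exact ⟨r ∘ₗ μ, by rw [LinearMap.comp_assoc, hμ, ← LinearMap.comp_assoc, hrs, LinearMap.id_comp]⟩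

theorem of_projective {j : ℕ} {Y : Type*} [AddCommGroup Y] [Module Λ Y] [Module.Projective Λ Y]
    [Module.Finite Λ Y] (h : P.ExtSuccVanishes j Λ) : P.ExtSuccVanishes j Y := by
  obtain ⟨b, π, hπ⟩ := Module.Finite.exists_fin' Λ Y
  obtain ⟨s, hs⟩ := Module.projective_lifting_property π LinearMap.id hπ
  exact (pi fun _ : Fin b ↦ h).of_retract s π hs

theorem exists_cocycle_lift {m : ℕ} {Y X M : Type*} [AddCommGroup Y] [Module Λ Y]
    [AddCommGroup X] [Module Λ X] [AddCommGroup M] [Module Λ M] (hY : P.ExtSuccVanishes m Y)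
    {i : Y →ₗ[Λ] X} {p : X →ₗ[Λ] M} (hi : Function.Injective i) (hexact : Function.Exact i p)
    (hp : Function.Surjective p) (φ : P.complex.X m →ₗ[Λ] M)
    (hφ : φ ∘ₗ (P.complex.d (m + 1) m).hom = 0) :
    ∃ φ' : P.complex.X m →ₗ[Λ] X, φ' ∘ₗ (P.complex.d (m + 1) m).hom = 0 ∧ p ∘ₗ φ' = φ := by
  obtain ⟨φ₀, hφ₀⟩ := Module.projective_lifting_property p φ hp
  obtain ⟨ψ, hψ⟩ := hexact.exists_comp_eq_of_injective hi (φ₀ ∘ₗ (P.complex.d (m + 1) m).hom)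
    (by rw [← LinearMap.comp_assoc, hφ₀, hφ])
  obtain ⟨ν, hν⟩ := hY ψ <| (LinearMap.cancel_left hi).1 <| by
    rw [← LinearMap.comp_assoc, hψ, LinearMap.comp_assoc, P.complex.hom_d_comp_hom_d,
      LinearMap.comp_zero, LinearMap.comp_zero]
  refine ⟨φ₀ - i ∘ₗ ν, ?_, ?_⟩
  · rw [LinearMap.sub_comp, LinearMap.comp_assoc, hν, hψ, sub_self]
  · rw [LinearMap.comp_sub, hφ₀, ← LinearMap.comp_assoc, hexact.linearMap_comp_eq_zero,
      LinearMap.zero_comp, sub_zero]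

theorem of_surjective {j : ℕ} {F Y : Type*} [AddCommGroup F] [Module Λ F] [AddCommGroup Y]
    [Module Λ Y] {π : F →ₗ[Λ] Y} (hπ : Function.Surjective π)
    (hker : P.ExtSuccVanishes (j + 1) (LinearMap.ker π)) (hF : P.ExtSuccVanishes j F) :
    P.ExtSuccVanishes j Y := by
  intro φ hφ
  obtain ⟨φ', hφ'_cocycle, hφ'⟩ := hker.exists_cocycle_lift (Submodule.injective_subtype _)
    (LinearMap.exact_subtype_ker_map π) hπ φ hφ
  obtain ⟨μ, hμ⟩ := hF φ' hφ'_cocycle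
  exact ⟨π ∘ₗ μ, by rw [LinearMap.comp_assoc, hμ, hφ']⟩

theorem of_projDimLE [IsNoetherianRing Λ] {m : ℕ} {Y : Type} [AddCommGroup Y] [Module Λ Y]
    [Module.Finite Λ Y] (hY : projDimLE Λ m Y) {j : ℕ}
    (hΛ : ∀ k, j ≤ k → k ≤ j + m → P.ExtSuccVanishes k Λ) : P.ExtSuccVanishes j Y := by
  induction m generalizing Y j with
  | zero =>
    have : Module.Projective Λ Y := hY
    exact of_projective (hΛ j le_rfl le_rfl)
  | succ m ih =>
    obtain ⟨b, π, hπ, hker⟩ := hY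
    exact of_surjective hπ (ih hker fun k hk hk' ↦ hΛ k (by omega) (by omega))
      (pi fun _ ↦ hΛ j le_rfl (by omega))

theorem exists_lift {Y X M : Type*} [AddCommGroup Y] [Module Λ Y]
    [AddCommGroup X] [Module Λ X] [AddCommGroup M] [Module Λ M] (hY : P.ExtSuccVanishes 0 Y)
    {i : Y →ₗ[Λ] X} {p : X →ₗ[Λ] M} (hi : Function.Injective i) (hexact : Function.Exact i p)
    (hp : Function.Surjective p) (f : X' →ₗ[Λ] M) : ∃ q : X' →ₗ[Λ] X, p ∘ₗ q = f := by
  let π : P.complex.X 0 →ₗ[Λ] X' := (P.π.f 0).hom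
  have hπ : Function.Surjective π := (ModuleCat.epi_iff_surjective (P.π.f 0)).1 inferInstance
  have hd : Function.Exact (P.complex.d 1 0).hom π :=
    (ShortComplex.ShortExact.moduleCat_exact_iff_function_exact _).1 P.exact₀
  obtain ⟨φ, hφ_cocycle, hφ⟩ := hY.exists_cocycle_lift hi hexact hp (f ∘ₗ π) (by
    rw [LinearMap.comp_assoc, hd.linearMap_comp_eq_zero, LinearMap.comp_zero])
  obtain ⟨q, hq⟩ := hd.exists_comp_eq_of_surjective hπ φ hφ_cocycle
  exact ⟨q, (LinearMap.cancel_right hπ).1 (by rw [LinearMap.comp_assoc, hq, hφ])⟩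

end ExtSuccVanishes

end CategoryTheory.ProjectiveResolution

open CategoryTheory

theorem stmt_3_general (Λ : Type) [Ring Λ] [IsNoetherianRing Λ] (n : ℕ) (hn : 1 ≤ n)
    (Y X M : Type) [AddCommGroup Y] [Module Λ Y] [Module.Finite Λ Y]
    [AddCommGroup X] [Module Λ X]
    [AddCommGroup M] [Module Λ M]
    (i : Y →ₗ[Λ] X) (p : X →ₗ[Λ] M)
    (hi : Function.Injective i) (hexact : Function.Exact i p) (hp : Function.Surjective p)
    (hY : projDimLE Λ (n - 1) Y) :
    ∀ (X' : Type) [AddCommGroup X'] [Module Λ X'] [Module.Finite Λ X'],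
      (∀ j, 1 ≤ j → j ≤ n → Subsingleton (extGrp Λ j X' Λ)) →
      ∀ f' : X' →ₗ[Λ] M, ∃ q : X' →ₗ[Λ] X, p ∘ₗ q = f' := by
  intro X' _ _ _ hX' f'
  obtain ⟨P⟩ : Nonempty (ProjectiveResolution (ModuleCat.of Λ X')) := HasProjectiveResolution.out
  have hY₀ : P.ExtSuccVanishes 0 Y := .of_projDimLE hY fun k _ hk ↦
    .of_subsingleton_extGrp (hX' (k + 1) (by omega) (by omega))
  exact hY₀.exists_lift hi hexact hp f'

/-- Given a short exact sequence `0 → Y → X → M → 0` with `pd Y ≤ n-1` and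
`Ext^i(X,Λ) = 0` for `1 ≤ i ≤ n`, every map `X' → M` from a module `X'` with
`Ext^i(X',Λ) = 0` for `1 ≤ i ≤ n` lifts through `X → M`. -/
theorem stmt_3 (Λ : Type) [Ring Λ] [IsNoetherianRing Λ] (n : ℕ) (hn : 1 ≤ n)
    (Y X M : Type) [AddCommGroup Y] [Module Λ Y] [Module.Finite Λ Y]
    [AddCommGroup X] [Module Λ X] [Module.Finite Λ X]
    [AddCommGroup M] [Module Λ M] [Module.Finite Λ M]
    (i : Y →ₗ[Λ] X) (p : X →ₗ[Λ] M)
    (hi : Function.Injective i) (hexact : Function.Exact i p) (hp : Function.Surjective p)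
    (hY : projDimLE Λ (n - 1) Y)
    (hX : ∀ j, 1 ≤ j → j ≤ n → Subsingleton (extGrp Λ j X Λ)) :
    ∀ (X' : Type) [AddCommGroup X'] [Module Λ X'] [Module.Finite Λ X'],
      (∀ j, 1 ≤ j → j ≤ n → Subsingleton (extGrp Λ j X' Λ)) →
      ∀ f' : X' →ₗ[Λ] M, ∃ q : X' →ₗ[Λ] X, p ∘ₗ q = f' :=
  stmt_3_general Λ n hn Y X M i p hi hexact hp hY
end
end

section
/- Let R be a commutative noetherian local ring with residue field k, M, N finitely generated R-modules with a surjection p : M ↠ N, and n ≥ 0. Then ξ(n, M) ≥ ξ(n, N). -/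
noncomputable section

/-- `SyzFactors R n f` : an induced map `Ω^n f` between `n`-th syzygies of `M` and `N`
(computed from chosen free covers) factors through a projective (= f.g. free) module. -/
def SyzFactors (R : Type) [Ring R] :
    (n : ℕ) → {M : Type} → [AddCommGroup M] → [Module R M] →
      {N : Type} → [AddCommGroup N] → [Module R N] → (M →ₗ[R] N) → Prop
  | 0, _M, _, _, _N, _, _, f => FactorsThruFree R f
  | n + 1, _M, _, _, _N, _, _, f =>
      ∃ (a b : ℕ) (p : (Fin a → R) →ₗ[R] _M) (q : (Fin b → R) →ₗ[R] _N)
        (φ : (Fin a → R) →ₗ[R] (Fin b → R)),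
        Function.Surjective p ∧ Function.Surjective q ∧
        ∃ hcomm : q ∘ₗ φ = f ∘ₗ p,
          SyzFactors R n (φ.restrict (p := LinearMap.ker p) (q := LinearMap.ker q)
            (fun x hx => by
              have h1 : q (φ x) = f (p x) := LinearMap.congr_fun hcomm x
              rw [LinearMap.mem_ker] at hx ⊢
              rw [h1, hx, map_zero]))

/-- The `n`-th approximated ξ-invariant: the dimension over the residue field `k` of the
subspace of `Hom_R(M, k)` of maps whose `n`-th syzygy factors through a projective. -/
def xi (R : Type) [CommRing R] [IsLocalRing R] (n : ℕ)
    (M : Type) [AddCommGroup M] [Module R M] : ℕ :=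
  Module.finrank (IsLocalRing.ResidueField R)
    (Submodule.span (IsLocalRing.ResidueField R)
      {f : M →ₗ[R] IsLocalRing.ResidueField R | SyzFactors R n f})


/-!
Precomposition with the surjection `p` embeds `Hom_R(N, k)` `k`-linearly into `Hom_R(M, k)`, so
it suffices that it preserves the maps whose `n`-th syzygy factors through a projective. Lifting
`p` along free covers of `M` and `N` gives a map of syzygies with `Ω(f ∘ p) = Ω f ∘ Ω p`, and a
map factoring through a free module still does so after precomposition.
-/

theorem FactorsThruFree.comp_right {R : Type} [Ring R] {M N K : Type}
    [AddCommGroup M] [Module R M] [AddCommGroup N] [Module R N] [AddCommGroup K] [Module R K]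
    {f : N →ₗ[R] K} (hf : FactorsThruFree R f) (s : M →ₗ[R] N) :
    FactorsThruFree R (f ∘ₗ s) := by
  obtain ⟨b, g, h, rfl⟩ := hf
  exact ⟨b, g, h ∘ₗ s, LinearMap.comp_assoc s h g⟩

theorem SyzFactors.comp_right {R : Type} [Ring R] [IsNoetherianRing R] (n : ℕ) {M N K : Type}
    [AddCommGroup M] [Module R M] [Module.Finite R M] [AddCommGroup N] [Module R N]
    [AddCommGroup K] [Module R K] {f : N →ₗ[R] K} (hf : SyzFactors R n f) (s : M →ₗ[R] N) :
    SyzFactors R n (f ∘ₗ s) := by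
  induction n generalizing M N K with
  | zero => exact FactorsThruFree.comp_right hf s
  | succ n ih =>
    obtain ⟨a, b, p, q, φ, hp, hq, hcomm, hsyz⟩ := hf
    obtain ⟨c, p', hp'⟩ := Module.Finite.exists_fin' R M
    obtain ⟨lam, hlam⟩ := Module.projective_lifting_property p (s ∘ₗ p') hp
    have hmaps : Set.MapsTo lam (LinearMap.ker p') (LinearMap.ker p) := fun x hx => by
      rw [SetLike.mem_coe, ← Submodule.mem_comap, ← LinearMap.ker_comp, hlam]
      exact LinearMap.ker_le_ker_comp p' s hx
    refine ⟨c, b, p', q, φ ∘ₗ lam, hp', hq, ?_, ?_⟩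
    · rw [← LinearMap.comp_assoc, hcomm, LinearMap.comp_assoc, hlam, LinearMap.comp_assoc]
    · -- `ker p'` is finitely generated because `R` is noetherian, as the induction needs.
      exact ih hsyz (lam.restrict hmaps)

instance Module.Finite.linearMap_of_isNoetherianRing (R S M N : Type*) [CommRing R] [Ring S]
    [IsNoetherianRing S] [AddCommGroup M] [Module R M] [Module.Finite R M]
    [AddCommGroup N] [Module R N] [Module S N] [Module.Finite S N] [SMulCommClass R S N] :
    Module.Finite S (M →ₗ[R] N) := by
  obtain ⟨a, σ, hσ⟩ := Module.Finite.exists_fin' R M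
  exact Module.Finite.of_injective _
    (LinearMap.lcomp_injective_of_surjective (S := S) (N := N) σ hσ)

theorem Submodule.finrank_span_le_finrank_span_of_injective {K V W : Type*} [DivisionRing K]
    [AddCommGroup V] [Module K V] [AddCommGroup W] [Module K W] [FiniteDimensional K W]
    {φ : V →ₗ[K] W} (hφ : Function.Injective φ) {s : Set V} {t : Set W} (hst : Set.MapsTo φ s t) :
    Module.finrank K (span K s) ≤ Module.finrank K (span K t) := by
  have hmaps : Set.MapsTo φ (span K s) (span K t) := fun x hx =>
    (span_le (p := (span K t).comap φ)).2 (fun y hy => subset_span (hst hy)) hx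
  exact LinearMap.finrank_le_finrank_of_injective (f := φ.restrict hmaps)
    fun x y h => Subtype.ext (hφ (congrArg Subtype.val h))

theorem stmt_11_general (R : Type) [CommRing R] [IsNoetherianRing R] [IsLocalRing R]
    (M N : Type) [AddCommGroup M] [Module R M] [Module.Finite R M]
    [AddCommGroup N] [Module R N] (n : ℕ)
    (p : M →ₗ[R] N) (hp : Function.Surjective p) :
    xi R n N ≤ xi R n M :=
  Submodule.finrank_span_le_finrank_span_of_injective
    (LinearMap.lcomp_injective_of_surjective p hp) fun _ hf => hf.comp_right n p

/-- If there is a surjection `M ↠ N` of finitely generated modules,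
then `ξ(n, M) ≥ ξ(n, N)`. -/
theorem stmt_11 (R : Type) [CommRing R] [IsNoetherianRing R] [IsLocalRing R]
    (M N : Type) [AddCommGroup M] [Module R M] [Module.Finite R M]
    [AddCommGroup N] [Module R N] [Module.Finite R N] (n : ℕ)
    (p : M →ₗ[R] N) (hp : Function.Surjective p) :
    xi R n N ≤ xi R n M :=
  stmt_11_general R M N n p hp
end
end

section
/- Let R be a commutative noetherian local ring, M a finitely generated R-module, and n ≥ 0. Then ξ(n, M) ≤ ξ(n+1, M) ≤ μ(M), where μ(M) is the minimal number of generators of M. Consequently the sequence (ξ(n,M))_n is eventually constant, with limit ξ(M) = dim_k { f ∈ Hom_R(M,k) : Ω^m f factors through a projective for some m ≥ 0 }. -/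
noncomputable section

/-- The minimal number of generators of a module. -/
def mu (R : Type) [Ring R] (M : Type) [AddCommGroup M] [Module R M] : ℕ :=
  sInf {n : ℕ | ∃ s : Fin n → M, Submodule.span R (Set.range s) = ⊤}

/-! A map factoring through a free module has, after enlarging the free cover of the target,
zero first syzygy; hence the sets defining `ξ(n, M)` increase with `n`. All of them live in
`Hom_R(M, k)`, which embeds into `k^μ(M)` by evaluation on a minimal generating set, so the
increasing chain of their spans stabilizes, necessarily at the span of their union. -/

lemma Monotone.exists_forall_ge_eq_iSup {α : Type*} [CompleteLattice α] [WellFoundedGT α]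
    {f : ℕ → α} (hf : Monotone f) : ∃ m, ∀ l, m ≤ l → f l = ⨆ n, f n := by
  obtain ⟨m, hm⟩ := WellFoundedGT.monotone_chain_condition ⟨f, hf⟩
  refine ⟨m, fun l hl => le_antisymm (le_iSup f l) (iSup_le fun n => ?_)⟩
  calc f n ≤ f (max n l) := hf (le_max_left n l)
    _ = f l := (hm _ (hl.trans (le_max_right n l))).symm.trans (hm l hl)

section

variable {R : Type} [Ring R] {M N : Type} [AddCommGroup M] [Module R M]
  [AddCommGroup N] [Module R N]

lemma factorsThruFree_zero : FactorsThruFree R (0 : M →ₗ[R] N) :=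
  ⟨0, 0, 0, rfl⟩

def finAddFunEquivProd (b c : ℕ) : (Fin (b + c) → R) ≃ₗ[R] (Fin b → R) × (Fin c → R) :=
  (LinearEquiv.funCongrLeft R R finSumFinEquiv).trans
    (LinearEquiv.sumArrowLequivProdArrow (Fin b) (Fin c) R R)

/- If `f = g ∘ h` factors through `R^c`, enlarge a free cover `q₀ : R^b₀ → N` to
`[q₀, g] : R^b₀ × R^c → N` and lift `f ∘ p` as `h ∘ p` into the second summand: the lift
vanishes on `ker p`, so the induced map on syzygies is zero. -/
lemma FactorsThruFree.syzFactors_one [Module.Finite R M] [Module.Finite R N]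
    {f : M →ₗ[R] N} (hf : FactorsThruFree R f) : SyzFactors R 1 f := by
  obtain ⟨c, g, h, rfl⟩ := hf
  obtain ⟨a, p, hp⟩ := Module.Finite.exists_fin' R M
  obtain ⟨b₀, q₀, hq₀⟩ := Module.Finite.exists_fin' R N
  let e := finAddFunEquivProd (R := R) b₀ c
  have hq : Function.Surjective (q₀.coprod g ∘ₗ e.toLinearMap) := by
    rw [← LinearMap.range_eq_top, LinearMap.range_comp_of_range_eq_top _ e.range,
      LinearMap.range_coprod, LinearMap.range_eq_top.mpr hq₀, top_sup_eq]
  have hcomm : (q₀.coprod g ∘ₗ e.toLinearMap) ∘ₗ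
      (e.symm.toLinearMap ∘ₗ LinearMap.inr R _ _ ∘ₗ h ∘ₗ p) = (g ∘ₗ h) ∘ₗ p := by
    ext x; simp
  refine ⟨a, b₀ + c, p, _, _, hp, hq, hcomm, ?_⟩
  show FactorsThruFree R _
  convert (factorsThruFree_zero (R := R))
  refine LinearMap.ext fun ⟨x, hx⟩ => Subtype.ext ?_
  simp [LinearMap.mem_ker.mp hx, Prod.mk_zero_zero]

lemma SyzFactors.succ [IsNoetherianRing R] {n : ℕ} [Module.Finite R M] [Module.Finite R N]
    {f : M →ₗ[R] N} (hf : SyzFactors R n f) : SyzFactors R (n + 1) f := by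
  induction n generalizing M N with
  | zero => exact FactorsThruFree.syzFactors_one hf
  | succ n ih =>
    obtain ⟨a, b, p, q, φ, hp, hq, hcomm, hsyz⟩ := hf
    exact ⟨a, b, p, q, φ, hp, hq, hcomm, ih hsyz⟩

end

lemma exists_span_range_eq_top_mu (R M : Type) [Ring R] [AddCommGroup M] [Module R M]
    [Module.Finite R M] : ∃ s : Fin (mu R M) → M, Submodule.span R (Set.range s) = ⊤ :=
  Nat.sInf_mem (Module.Finite.exists_fin (R := R) (M := M))

lemma exists_injective_linearMap_fin_mu (R M K : Type) [Ring R] [AddCommGroup M]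
    [Module R M] [Module.Finite R M] [Field K] [Module R K] [SMulCommClass R K K] :
    ∃ T : (M →ₗ[R] K) →ₗ[K] (Fin (mu R M) → K), Function.Injective T := by
  obtain ⟨s, hs⟩ := exists_span_range_eq_top_mu R M
  exact ⟨{ toFun := fun f i => f (s i), map_add' := fun _ _ => rfl, map_smul' := fun _ _ => rfl },
    fun f g hfg => LinearMap.ext_on_range hs (congrFun hfg)⟩

/-- The sequence `ξ(0,M) ≤ ξ(1,M) ≤ ⋯` is non-decreasing and bounded above by `μ(M)`,
hence eventually constant, with limit the ξ-invariant
`ξ(M) = dim_k {f : M → k | Ω^m f factors through a projective for some m}`. -/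
theorem stmt_12 (R : Type) [CommRing R] [IsNoetherianRing R] [IsLocalRing R]
    (M : Type) [AddCommGroup M] [Module R M] [Module.Finite R M] :
    (∀ n : ℕ, xi R n M ≤ xi R (n + 1) M) ∧
    (∀ n : ℕ, xi R (n + 1) M ≤ mu R M) ∧
    (∃ m : ℕ, ∀ l : ℕ, m ≤ l →
      xi R l M =
        Module.finrank (IsLocalRing.ResidueField R)
          (Submodule.span (IsLocalRing.ResidueField R)
            {f : M →ₗ[R] IsLocalRing.ResidueField R | ∃ j : ℕ, SyzFactors R j f})) := by
  set k := IsLocalRing.ResidueField R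
  let S : ℕ → Submodule k (M →ₗ[R] k) := fun n => Submodule.span k {f | SyzFactors R n f}
  have hS : Monotone S :=
    monotone_nat_of_le_succ fun n => Submodule.span_mono fun f hf => SyzFactors.succ hf
  obtain ⟨T, hT⟩ := exists_injective_linearMap_fin_mu R M k
  have : FiniteDimensional k (M →ₗ[R] k) := FiniteDimensional.of_injective T hT
  have hbound (n : ℕ) : xi R n M ≤ mu R M :=
    calc Module.finrank k (S n) ≤ Module.finrank k (M →ₗ[R] k) := Submodule.finrank_le _
      _ ≤ Module.finrank k (Fin (mu R M) → k) := LinearMap.finrank_le_finrank_of_injective hT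
      _ = mu R M := Module.finrank_fin_fun k
  refine ⟨fun n => Submodule.finrank_mono (hS n.le_succ), fun n => hbound (n + 1), ?_⟩
  obtain ⟨m, hm⟩ := hS.exists_forall_ge_eq_iSup
  have hunion : Submodule.span k {f : M →ₗ[R] k | ∃ j, SyzFactors R j f} = ⨆ n, S n := by
    rw [Set.ofPred_exists, Submodule.span_iUnion]
  exact ⟨m, fun l hl => by rw [hunion, ← hm l hl]; rfl⟩
end
end

section
/- Let R be a commutative noetherian local ring with residue field k, M a finitely generated R-module, n ≥ 0, and suppose that every R-linear map f : M → k whose n-th syzygy Ω^n f factors through a projective module is zero (i.e., ξ(n,M) = 0). Then for every finitely generated R-module Z of projective dimension at most n and every R-linear map f : M → Z, the induced map f ⊗_R k : M ⊗ k → Z ⊗ k is zero. -/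
/-!
If a map factors through a module `K` of projective dimension at most `n`, lifting along free
covers makes its `i`-th syzygy factor through an `i`-th syzygy of `K`, which is projective for
`i = n`. Hence `Ω^n (g ∘ f)` factors through a free module for every `g : Z → k`, and the
hypothesis forces `g ∘ f = 0`. As the `R`-linear maps `Z → k` separate the points of `Z / 𝔪Z`,
the image of `f` lies in `𝔪Z`, i.e. `f ⊗ k = 0`.
-/

noncomputable section

section Syzygies

variable {R : Type} [Ring R]

theorem LinearMap.mapsTo_ker_of_comp_eq {M M' N N' : Type} [AddCommGroup M] [Module R M]
    [AddCommGroup M'] [Module R M'] [AddCommGroup N] [Module R N] [AddCommGroup N']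
    [Module R N'] {p : M →ₗ[R] N} {q : M' →ₗ[R] N'} {φ : M →ₗ[R] M'} {f : N →ₗ[R] N'}
    (h : q ∘ₗ φ = f ∘ₗ p) : Set.MapsTo φ (LinearMap.ker p) (LinearMap.ker q) := by
  intro x hx
  rw [SetLike.mem_coe, LinearMap.mem_ker] at hx ⊢
  rw [← LinearMap.comp_apply, h, LinearMap.comp_apply, hx, map_zero]

theorem factorsThruFree_comp_of_projective {M K N : Type} [AddCommGroup M] [Module R M]
    [AddCommGroup K] [Module R K] [Module.Finite R K] [Module.Projective R K]
    [AddCommGroup N] [Module R N] (u : M →ₗ[R] K) (v : K →ₗ[R] N) :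
    FactorsThruFree R (v ∘ₗ u) := by
  obtain ⟨b, p, hp⟩ := Module.Finite.exists_fin' R K
  obtain ⟨s, hs⟩ := Module.projective_lifting_property p LinearMap.id hp
  refine ⟨b, v ∘ₗ p, s ∘ₗ u, ?_⟩
  rw [LinearMap.comp_assoc, ← LinearMap.comp_assoc u s p, hs, LinearMap.id_comp]

theorem syzFactors_comp_of_projDimLE [IsNoetherianRing R] (n : ℕ) {M K N : Type}
    [AddCommGroup M] [Module R M] [Module.Finite R M]
    [AddCommGroup K] [Module R K] [Module.Finite R K]
    [AddCommGroup N] [Module R N] [Module.Finite R N]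
    (hK : projDimLE R n K) (u : M →ₗ[R] K) (v : K →ₗ[R] N) : SyzFactors R n (v ∘ₗ u) := by
  induction n generalizing M K N with
  | zero =>
    have : Module.Projective R K := hK
    exact factorsThruFree_comp_of_projective u v
  | succ n ih =>
    obtain ⟨b, p, hp, hker⟩ := hK
    obtain ⟨a, p', hp'⟩ := Module.Finite.exists_fin' R M
    obtain ⟨c, q, hq⟩ := Module.Finite.exists_fin' R N
    obtain ⟨ψ, hψ⟩ := Module.projective_lifting_property p (u ∘ₗ p') hp
    obtain ⟨θ, hθ⟩ := Module.projective_lifting_property q (v ∘ₗ p) hq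
    have hcomm : q ∘ₗ (θ ∘ₗ ψ) = (v ∘ₗ u) ∘ₗ p' := by
      rw [← LinearMap.comp_assoc, hθ, LinearMap.comp_assoc, hψ, LinearMap.comp_assoc]
    refine ⟨a, c, p', q, θ ∘ₗ ψ, hp', hq, hcomm, ?_⟩
    rw [LinearMap.restrict_comp (LinearMap.mapsTo_ker_of_comp_eq hψ)
      (LinearMap.mapsTo_ker_of_comp_eq hθ)]
    exact ih hker _ _

end Syzygies

theorem TensorProduct.tmul_eq_zero_of_mem_smul_top {R Z N : Type} [CommRing R]
    [AddCommGroup Z] [Module R Z] [AddCommGroup N] [Module R N] {I : Ideal R} {z : Z}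
    (hz : z ∈ I • (⊤ : Submodule R Z)) {c : N} (hc : ∀ r ∈ I, r • c = 0) :
    z ⊗ₜ[R] c = 0 := by
  refine Submodule.smul_induction_on hz (fun r hr x _ => ?_) (fun x y hx hy => ?_)
  · rw [TensorProduct.smul_tmul, hc r hr, TensorProduct.tmul_zero]
  · rw [TensorProduct.add_tmul, hx, hy, add_zero]

theorem Ideal.mem_smul_top_of_forall_linearMap_quotient_eq_zero {R Z : Type} [CommRing R]
    [AddCommGroup Z] [Module R Z] (I : Ideal R) [I.IsMaximal] {z : Z}
    (h : ∀ g : Z →ₗ[R] R ⧸ I, g z = 0) : z ∈ I • (⊤ : Submodule R Z) := by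
  let := Ideal.Quotient.field I
  by_contra hz
  rw [← Submodule.Quotient.mk_eq_zero] at hz
  obtain ⟨φ, hφ⟩ := Module.Projective.exists_dual_ne_zero (R ⧸ I) hz
  exact hφ (h (φ.restrictScalars R ∘ₗ (I • ⊤ : Submodule R Z).mkQ))

theorem IsLocalRing.rTensor_residueField_eq_zero_of_forall_comp_eq_zero {R M Z : Type}
    [CommRing R] [IsLocalRing R] [AddCommGroup M] [Module R M] [AddCommGroup Z] [Module R Z]
    (f : M →ₗ[R] Z) (h : ∀ g : Z →ₗ[R] ResidueField R, g ∘ₗ f = 0) :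
    f.rTensor (ResidueField R) = 0 := by
  refine TensorProduct.ext' fun m c => ?_
  have hfm : f m ∈ maximalIdeal R • (⊤ : Submodule R Z) :=
    Ideal.mem_smul_top_of_forall_linearMap_quotient_eq_zero _ fun g =>
      LinearMap.congr_fun (h g) m
  rw [LinearMap.rTensor_tmul, LinearMap.zero_apply]
  refine TensorProduct.tmul_eq_zero_of_mem_smul_top hfm fun r hr => ?_
  rw [Algebra.smul_def, IsLocalRing.ResidueField.algebraMap_eq,
    (IsLocalRing.residue_eq_zero_iff r).mpr hr, zero_mul]

/-- If every linear map `f : M → k` whose `n`-th syzygy factors through a projective is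
zero (i.e. `ξ(n,M) = 0`), then for every finitely generated module `Z` of projective
dimension at most `n` and every `f : M → Z`, the induced map `f ⊗ k` is zero. -/
theorem stmt_15 (R : Type) [CommRing R] [IsNoetherianRing R] [IsLocalRing R]
    (M : Type) [AddCommGroup M] [Module R M] [Module.Finite R M] (n : ℕ)
    (hxi : ∀ f : M →ₗ[R] IsLocalRing.ResidueField R, SyzFactors R n f → f = 0) :
    ∀ (Z : Type) [AddCommGroup Z] [Module R Z] [Module.Finite R Z],
      projDimLE R n Z → ∀ f : M →ₗ[R] Z,
        LinearMap.rTensor (IsLocalRing.ResidueField R) f = 0 := by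
  intro Z _ _ _ hZ f
  exact IsLocalRing.rTensor_residueField_eq_zero_of_forall_comp_eq_zero f fun g =>
    hxi (g ∘ₗ f) (syzFactors_comp_of_projDimLE n hZ f g)
end
end
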